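/- Fix j ≥ 1 and s ≥ 0 with λ = 1, and let g be the corresponding solution sequence (value mj + 1 repeated s + mj + 1 times for each m ≥ 0, preceded by one extra 1). If n = p_m := 1 + ∑_{i=0}^{m}(s + ij + 1), then g(n) = (m+1)j + 1, and this value satisfies the quadratic equation g(n)² + (2s − j)·g(n) + (3j − 2s − 1 − 2jn) = 0. -/

import Mathlib

/-! `golombThresh j s` is strictly increasing, so the greatest `k` with
`golombThresh j s k ≤ golombThresh j s m` is `m` itself; hence `golombW` takes the value
`j m + 1` at `golombThresh j s m`. The quadratic identity is then the closed form
`2 (golombThresh j s m - 1) = 2 m (s + 1) + j m (m - 1)` with `m` replaced by `m + 1`. -/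

def golombThresh (j s m : ℕ) : ℕ := 1 + ∑ i ∈ Finset.range m, (s + i * j + 1)

def golombW (j s n : ℕ) : ℕ :=
  j * Nat.findGreatest (fun m => golombThresh j s m ≤ n) n + 1

def golombP (j s m : ℕ) : ℕ := golombThresh j s (m + 1)

lemma golombThresh_succ (j s m : ℕ) :
    golombThresh j s (m + 1) = golombThresh j s m + (s + m * j + 1) := by
  rw [golombThresh, Finset.sum_range_succ, ← add_assoc, ← golombThresh]

lemma golombThresh_strictMono (j s : ℕ) : StrictMono (golombThresh j s) :=
  strictMono_nat_of_lt_succ fun m => by rw [golombThresh_succ]; omega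

lemma lt_golombThresh (j s m : ℕ) : m < golombThresh j s m := by
  induction m with
  | zero => simp [golombThresh]
  | succ m ih => rw [golombThresh_succ]; omega

lemma findGreatest_golombThresh (j s m : ℕ) :
    Nat.findGreatest (fun k => golombThresh j s k ≤ golombThresh j s m) (golombThresh j s m)
      = m := by
  rw [Nat.findGreatest_eq_iff]
  refine ⟨(lt_golombThresh j s m).le, fun _ => le_rfl, fun k hmk _ hk => ?_⟩
  exact hk.not_gt (golombThresh_strictMono j s hmk)

lemma golombW_golombThresh (j s m : ℕ) : golombW j s (golombThresh j s m) = j * m + 1 := by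
  rw [golombW, findGreatest_golombThresh]

lemma two_mul_golombThresh (j s m : ℕ) :
    2 * (golombThresh j s m : ℤ) = 2 + 2 * m * (s + 1) + j * m * (m - 1) := by
  induction m with
  | zero => simp [golombThresh]
  | succ m ih =>
    rw [golombThresh_succ]
    push_cast
    linear_combination ih

theorem golombW_at_leaf_general (j s : ℕ) (m n : ℕ) (hn : n = golombP j s m) :
    golombW j s n = (m + 1) * j + 1 ∧
      (golombW j s n : ℤ) ^ 2 + (2 * (s : ℤ) - j) * golombW j s n +
        (3 * (j : ℤ) - 2 * s - 1 - 2 * j * n) = 0 := by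
  have hW : golombW j s n = (m + 1) * j + 1 := by
    rw [hn, golombP, golombW_golombThresh, mul_comm]
  refine ⟨hW, ?_⟩
  have hP := two_mul_golombThresh j s (m + 1)
  rw [← golombP, ← hn] at hP
  rw [hW]
  push_cast at hP ⊢
  linear_combination (-(j : ℤ)) * hP

/-- At leaf-label positions `n = p_m`, the value is `(m+1)j + 1` and it satisfies
    the quadratic `g(n)² + (2s − j)g(n) + (3j − 2s − 1 − 2jn) = 0`. -/
theorem golombW_at_leaf (j s : ℕ) (hj : 1 ≤ j) (m n : ℕ) (hn : n = golombP j s m) :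
    golombW j s n = (m + 1) * j + 1 ∧
      (golombW j s n : ℤ) ^ 2 + (2 * (s : ℤ) - j) * golombW j s n +
        (3 * (j : ℤ) - 2 * s - 1 - 2 * j * n) = 0 :=
  golombW_at_leaf_general j s m n hn
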